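/- arXiv:2104.08950 — 2 statements merged into one kernel-verified Lean document; each statement's English description precedes it below -/
import Mathlib

section
/- Suppose c₁, …, c_m are formal power series over X = {x₀, x₁} with relative degrees r₁, …, r_m. If for every value r appearing among the rᵢ with multiplicity greater than one, the sum of the coefficients ⟨c_k, x₀^{r-1}x₁⟩ over all indices k with r_k = r is nonzero, then c₁ + ⋯ + c_m has relative degree min_i r_i. -/
/-- Words over the alphabet `X = {x₀, x₁}`, with `0 ↦ x₀` and `1 ↦ x₁`. -/
abbrev Word := List (Fin 2)

/-- A formal power series `c ∈ ℝ⟨⟨X⟩⟩` is a coefficient map `X* → ℝ`. -/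
abbrev Series := Word → ℝ

/-- `c` has relative degree `r ≥ 1`: the coefficient of `x₀^{r-1}x₁` is nonzero and
every word in the support of `c` containing the letter `x₁` has the form
`x₀^k x₁ η'` with `k ≥ r-1`.  (Equivalent to the decomposition
`c = c_N + K x₀^{r-1}x₁ + x₀^{r-1}e` with `K ≠ 0`, `e` proper, `x₁ ∉ supp e`.) -/
def HasRelDeg (c : Series) (r : ℕ) : Prop :=
  1 ≤ r ∧ c (List.replicate (r - 1) 0 ++ [1]) ≠ 0 ∧
    ∀ η : Word, c η ≠ 0 → (1 : Fin 2) ∈ η →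
      ∃ (k : ℕ) (η' : Word), r - 1 ≤ k ∧ η = List.replicate k 0 ++ 1 :: η'

/-!
Write `ρ = min_i r_i`. A summand with `r_i > ρ` has zero coefficient at `x₀^{ρ-1}x₁`, since every
`x₁`-word in its support starts with at least `r_i - 1 > ρ - 1` letters `x₀`. Hence the
coefficient of the sum at `x₀^{ρ-1}x₁` is the sum over the indices with `r_i = ρ`: a single
nonzero coefficient if `ρ` is attained once, nonzero by hypothesis otherwise. The support
condition for `ρ` holds for every summand because `ρ ≤ r_i`, hence for the sum.
-/

theorem List.eq_of_replicate_append_cons_eq {α : Type*} {a b : α} (hab : a ≠ b) :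
    ∀ {m n : ℕ} {u v : List α},
      List.replicate m a ++ b :: u = List.replicate n a ++ b :: v → m = n
  | 0, 0, _, _, _ => rfl
  | 0, _ + 1, _, _, h => absurd (List.cons.inj h).1 hab.symm
  | _ + 1, 0, _, _, h => absurd (List.cons.inj h).1 hab
  | _ + 1, _ + 1, _, _, h =>
    congrArg (· + 1) (eq_of_replicate_append_cons_eq hab (List.cons.inj h).2)

namespace HasRelDeg

variable {c : Series} {r : ℕ}

theorem coeff_eq_zero_of_lt (hc : HasRelDeg c r) {k : ℕ} (hk : k < r - 1) :
    c (List.replicate k 0 ++ [1]) = 0 := by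
  by_contra hne
  obtain ⟨j, η', hj, heq⟩ := hc.2.2 _ hne (by simp)
  have : k = j := List.eq_of_replicate_append_cons_eq (by decide) heq
  omega

end HasRelDeg

theorem hasRelDeg_sum {ι : Type*} (s : Finset ι) (c : ι → Series) (r : ι → ℕ) {ρ : ℕ}
    (hρ : 1 ≤ ρ) (hc : ∀ i ∈ s, HasRelDeg (c i) (r i)) (hle : ∀ i ∈ s, ρ ≤ r i)
    (hcoeff : ∑ i ∈ s.filter (fun i => r i = ρ), c i (List.replicate (ρ - 1) 0 ++ [1]) ≠ 0) :
    HasRelDeg (∑ i ∈ s, c i) ρ := by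
  refine ⟨hρ, ?_, ?_⟩
  · rwa [Finset.sum_apply, ← Finset.sum_filter_of_ne (p := fun i => r i = ρ)]
    intro i hi hne
    by_contra hri
    exact hne ((hc i hi).coeff_eq_zero_of_lt (by have := hle i hi; omega))
  · intro η hη h1
    rw [Finset.sum_apply] at hη
    obtain ⟨i, hi, hne⟩ := Finset.exists_ne_zero_of_sum_ne_zero hη
    obtain ⟨k, η', hk, heq⟩ := (hc i hi).2.2 η hne h1
    exact ⟨k, η', by have := hle i hi; omega, heq⟩

/-- If `c₁, …, c_m` have relative degrees `r₁, …, r_m` and, for every value `ρ`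
occurring among the `rᵢ` with multiplicity greater than one, the sum of the
coefficients `⟨c_k, x₀^{ρ-1}x₁⟩` over all `k` with `r_k = ρ` is nonzero, then
`c₁ + ⋯ + c_m` has relative degree `min_i r_i`. -/
theorem relDeg_sum_of_multiplicities (m : ℕ) (hm : 0 < m)
    (c : Fin m → Series) (r : Fin m → ℕ)
    (hc : ∀ i, HasRelDeg (c i) (r i))
    (hsum : ∀ ρ : ℕ, 1 < (Finset.univ.filter fun i => r i = ρ).card →
      ∑ i ∈ Finset.univ.filter (fun i => r i = ρ),
        c i (List.replicate (ρ - 1) 0 ++ [1]) ≠ 0) :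
    HasRelDeg (∑ i, c i) (Finset.univ.inf' ⟨⟨0, hm⟩, Finset.mem_univ _⟩ r) := by
  obtain ⟨i₀, -, hi₀⟩ := Finset.exists_mem_eq_inf' ⟨⟨0, hm⟩, Finset.mem_univ _⟩ r
  set ρ := Finset.univ.inf' ⟨⟨0, hm⟩, Finset.mem_univ _⟩ r
  have hi₀_mem : i₀ ∈ Finset.univ.filter fun i => r i = ρ :=
    Finset.mem_filter.mpr ⟨Finset.mem_univ _, hi₀.symm⟩
  refine hasRelDeg_sum Finset.univ c r (hi₀ ▸ (hc i₀).1) (fun i _ => hc i)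
    (fun i _ => Finset.inf'_le _ (Finset.mem_univ i)) ?_
  obtain hcard | hcard := (Finset.one_le_card.mpr ⟨i₀, hi₀_mem⟩).eq_or_lt
  · obtain ⟨a, ha⟩ := Finset.card_eq_one.mp hcard.symm
    have ha_mem : a ∈ Finset.univ.filter fun i => r i = ρ := by
      rw [ha]; exact Finset.mem_singleton_self a
    have hra : r a = ρ := (Finset.mem_filter.mp ha_mem).2
    rw [ha, Finset.sum_singleton, ← hra]
    exact (hc a).2.1
  · exact hsum ρ hcard
end

section
/- For the shuffle product on words over a finite alphabet X, the iterated integral functionals satisfy E_η[u](t,t₀) · E_ξ[u](t,t₀) = E_{η ⧢ ξ}[u](t,t₀) for all words η, ξ ∈ X*, all t₀ ≤ t, and all integrable u, where E is extended linearly to polynomials. -/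
/-! The product rule for primitives, `F(t) G(t) = ∫_{t₀}^t (f G + g F)` with `F, G` the
primitives of integrable `f, g` from `t₀` (Fubini on the triangle `τ ≤ s`), is the analytic
counterpart of the shuffle recursion. Applied to `E_{x_iη} = ∫ u_i E_η` and `E_{x_jξ} = ∫ u_j E_ξ`
it rewrites `E_{x_iη} E_{x_jξ}` as `∫ u_i E_η E_{x_jξ} + ∫ u_j E_{x_iη} E_ξ`; induction on the
two words turns the integrands into `E` of `η ⧢ x_jξ` and `x_iη ⧢ ξ`, and prepending `x_i`, `x_j`
is exactly the first-letter decomposition of `x_iη ⧢ x_jξ`. -/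

open MeasureTheory

/-- The monomial series `1·w` over an alphabet `A`. -/
def mono {A : Type*} [DecidableEq A] (w : List A) : List A → ℝ :=
  fun ξ => if ξ = w then 1 else 0

/-- Coefficients of the shuffle product via the dual recursion
`⟨c ⧢ d, ∅⟩ = ⟨c,∅⟩⟨d,∅⟩`, `⟨c ⧢ d, aξ⟩ = ⟨(a⁻¹c) ⧢ d, ξ⟩ + ⟨c ⧢ (a⁻¹d), ξ⟩`;
this is the bilinear product with `(x_iη) ⧢ (x_jζ) = x_i(η ⧢ x_jζ) + x_j(x_iη ⧢ ζ)`
and `∅ ⧢ η = η ⧢ ∅ = η`. -/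
def shuffleCoeff {A : Type*} : List A → (List A → ℝ) → (List A → ℝ) → ℝ
  | [], c, d => c [] * d []
  | a :: ξ, c, d =>
      shuffleCoeff ξ (fun ζ => c (a :: ζ)) d + shuffleCoeff ξ c (fun ζ => d (a :: ζ))

/-- The shuffle product. -/
def shuffle {A : Type*} (c d : List A → ℝ) : List A → ℝ := fun ξ => shuffleCoeff ξ c d

/-- The iterated integral functionals: `E_∅[u] = 1` and
`E_{x_iη̄}[u](t,t₀) = ∫_{t₀}^t u_i(τ) E_{η̄}[u](τ,t₀) dτ`. -/
noncomputable def E {m : ℕ} (u : ℝ → Fin (m + 1) → ℝ) (t₀ : ℝ) :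
    List (Fin (m + 1)) → ℝ → ℝ
  | [] => fun _ => 1
  | i :: η => fun t => ∫ τ in t₀..t, u τ i * E u t₀ η τ

open Set

namespace intervalIntegral

variable {V : Type*} [NormedAddCommGroup V] [NormedSpace ℝ V] {μ : Measure ℝ} [NullSingletonClass μ]

theorem integral_indicator_ge {f : ℝ → V} {a b c : ℝ} (h : c ∈ Icc a b) :
    ∫ x in a..b, (Ici c).indicator f x ∂μ = ∫ x in c..b, f x ∂μ := by
  have hcb : Ioc a b ∩ Ioi c = Ioc c b := by rw [Ioc_inter_Ioi, sup_eq_right.2 h.1]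
  rw [integral_of_le (h.1.trans h.2), integral_of_le h.2, setIntegral_indicator measurableSet_Ici,
    ← hcb]
  exact setIntegral_congr_set (ae_eq_set_inter (ae_eq_refl _) (Ioi_ae_eq_Ici (μ := μ))).symm

theorem integral_mul_primitive_swap {f g : ℝ → ℝ} {a b : ℝ} (hab : a ≤ b)
    (hf : IntervalIntegrable f volume a b) (hg : IntervalIntegrable g volume a b) :
    ∫ s in a..b, f s * ∫ τ in a..s, g τ = ∫ τ in a..b, g τ * ∫ s in τ..b, f s := by
  let H : ℝ → ℝ → ℝ := fun s τ => {τ | τ ≤ s}.indicator (fun τ => f s * g τ) τ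
  have hH : IntegrableOn (Function.uncurry H) (uIoc a b ×ˢ uIoc a b) := by
    have : Integrable (fun p : ℝ × ℝ => f p.1 * g p.2)
        ((volume.restrict (uIoc a b)).prod (volume.restrict (uIoc a b))) :=
      hf.def'.mul_prod hg.def'
    rw [IntegrableOn, Measure.volume_eq_prod, ← Measure.prod_restrict]
    exact (this.indicator (measurableSet_le measurable_snd measurable_fst)).congr
      (Filter.Eventually.of_forall fun p => by simp [H, Function.uncurry, indicator_apply])
  calc ∫ s in a..b, f s * ∫ τ in a..s, g τ = ∫ s in a..b, ∫ τ in a..b, H s τ := by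
        refine integral_congr fun s hs => ?_
        rw [uIcc_of_le hab] at hs
        simp only [H, integral_indicator hs, integral_const_mul]
    _ = ∫ τ in a..b, ∫ s in a..b, H s τ := intervalIntegral_intervalIntegral_swap hH
    _ = ∫ τ in a..b, g τ * ∫ s in τ..b, f s := by
        refine integral_congr fun τ hτ => ?_
        rw [uIcc_of_le hab] at hτ
        have : (fun s => H s τ) = (Ici τ).indicator (fun s => f s * g τ) := by
          funext s; simp [H, indicator_apply]
        rw [this, integral_indicator_ge hτ, integral_mul_const, mul_comm]

theorem integral_mul_integral_eq_integral_mul_primitive_add {f g : ℝ → ℝ} {a b : ℝ} (hab : a ≤ b)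
    (hf : IntervalIntegrable f volume a b) (hg : IntervalIntegrable g volume a b) :
    (∫ s in a..b, f s) * (∫ s in a..b, g s)
      = (∫ s in a..b, f s * ∫ τ in a..s, g τ) + ∫ s in a..b, g s * ∫ τ in a..s, f τ := by
  have hgF : IntervalIntegrable (fun s => g s * ∫ τ in a..s, f τ) volume a b :=
    hg.mul_continuousOn (continuousOn_primitive_interval' hf left_mem_uIcc)
  have hsplit : ∀ s ∈ uIcc a b, ∫ τ in s..b, f τ = (∫ τ in a..b, f τ) - ∫ τ in a..s, f τ :=
    fun s hs => (integral_interval_sub_left hf (hf.mono_set (uIcc_subset_uIcc_left hs))).symm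
  have hfG : ∫ s in a..b, f s * ∫ τ in a..s, g τ
      = ∫ s in a..b, (g s * ∫ τ in a..b, f τ) - g s * ∫ τ in a..s, f τ := by
    rw [integral_mul_primitive_swap hab hf hg]
    exact integral_congr fun s hs => by rw [hsplit s hs, mul_sub]
  rw [hfG, integral_sub (hg.mul_const _) hgF, integral_mul_const, mul_comm]
  ring

end intervalIntegral

section Shuffle

variable {A : Type*}

theorem shuffleCoeff_zero_left (w : List A) (d : List A → ℝ) :
    shuffleCoeff w (fun _ => 0) d = 0 := by
  induction w generalizing d with
  | nil => simp [shuffleCoeff]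
  | cons a w ih => simp [shuffleCoeff, ih]

theorem shuffleCoeff_zero_right (w : List A) (c : List A → ℝ) :
    shuffleCoeff w c (fun _ => 0) = 0 := by
  induction w generalizing c with
  | nil => simp [shuffleCoeff]
  | cons a w ih => simp [shuffleCoeff, ih]

variable [DecidableEq A]

theorem mono_nil_cons (a : A) : (fun ζ => mono ([] : List A) (a :: ζ)) = fun _ => 0 := by
  funext ζ; simp [mono]

theorem mono_cons_cons (a i : A) (η : List A) :
    (fun ζ => mono (i :: η) (a :: ζ)) = if a = i then mono η else fun _ => 0 := by
  split_ifs with h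
  · subst h; funext ζ; simp [mono]
  · funext ζ; simp [mono, h]

@[simp]
theorem shuffle_mono_nil_left (d : List A → ℝ) : shuffle (mono []) d = d := by
  funext w
  induction w generalizing d with
  | nil => simp [shuffle, shuffleCoeff, mono]
  | cons a w ih =>
    simp only [shuffle, shuffleCoeff, mono_nil_cons, shuffleCoeff_zero_left, zero_add]
    exact ih fun ζ => d (a :: ζ)

@[simp]
theorem shuffle_mono_nil_right (c : List A → ℝ) : shuffle c (mono []) = c := by
  funext w
  induction w generalizing c with
  | nil => simp [shuffle, shuffleCoeff, mono]
  | cons a w ih =>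
    simp only [shuffle, shuffleCoeff, mono_nil_cons, shuffleCoeff_zero_right, add_zero]
    exact ih fun ζ => c (a :: ζ)

theorem shuffle_mono_cons_cons (i j a : A) (η ξ ζ : List A) :
    shuffle (mono (i :: η)) (mono (j :: ξ)) (a :: ζ)
      = (if a = i then shuffle (mono η) (mono (j :: ξ)) ζ else 0)
        + (if a = j then shuffle (mono (i :: η)) (mono ξ) ζ else 0) := by
  simp only [shuffle, shuffleCoeff, mono_cons_cons]
  congr 1 <;> split_ifs
  exacts [rfl, shuffleCoeff_zero_left ζ _, rfl, shuffleCoeff_zero_right ζ _]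

end Shuffle

section WordSums

variable {A : Type*} [Fintype A]

theorem sum_ofFn_succ {M : Type*} [AddCommMonoid M] (n : ℕ) (φ : List A → M) :
    ∑ f : Fin (n + 1) → A, φ (List.ofFn f) = ∑ a : A, ∑ g : Fin n → A, φ (a :: List.ofFn g) := by
  rw [← Fintype.sum_prod_type']
  exact Fintype.sum_equiv (Fin.consEquiv fun _ => A).symm _ _ fun f => by
    rw [List.ofFn_succ]; rfl

theorem sum_ofFn_mono_mul [DecidableEq A] {n : ℕ} {w : List A} (hw : w.length = n)
    (φ : List A → ℝ) : ∑ f : Fin n → A, mono w (List.ofFn f) * φ (List.ofFn f) = φ w := by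
  subst hw
  rw [Finset.sum_eq_single_of_mem w.get (Finset.mem_univ _)]
  · simp [mono, List.ofFn_get]
  · intro f _ hf
    have hne : List.ofFn f ≠ w := fun h => hf (List.ofFn_injective (h.trans (List.ofFn_get w).symm))
    simp [mono, hne]

end WordSums

section IteratedIntegral

open intervalIntegral

variable {m : ℕ} (u : ℝ → Fin (m + 1) → ℝ) (t₀ : ℝ)

/-- `E` extended linearly to the length-`n` part of a series `c`. -/
noncomputable def Epoly (n : ℕ) (c : List (Fin (m + 1)) → ℝ) (t : ℝ) : ℝ :=
  ∑ f : Fin n → Fin (m + 1), c (List.ofFn f) * E u t₀ (List.ofFn f) t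

theorem E_cons (i : Fin (m + 1)) (w : List (Fin (m + 1))) (t : ℝ) :
    E u t₀ (i :: w) t = ∫ τ in t₀..t, u τ i * E u t₀ w τ := rfl

theorem continuousOn_E {t₁ : ℝ} (hint : ∀ i, IntervalIntegrable (fun τ => u τ i) volume t₀ t₁)
    (w : List (Fin (m + 1))) : ContinuousOn (E u t₀ w) (uIcc t₀ t₁) := by
  induction w with
  | nil => exact continuousOn_const
  | cons j w ih =>
    exact continuousOn_primitive_interval' ((hint j).mul_continuousOn ih) left_mem_uIcc

theorem Epoly_mono {n : ℕ} {w : List (Fin (m + 1))} (hw : w.length = n) (t : ℝ) :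
    Epoly u t₀ n (mono w) t = E u t₀ w t :=
  sum_ofFn_mono_mul hw fun v => E u t₀ v t

theorem integral_mul_Epoly {t : ℝ} {i : Fin (m + 1)}
    (hE : ∀ w, IntervalIntegrable (fun s => u s i * E u t₀ w s) volume t₀ t)
    (n : ℕ) (c : List (Fin (m + 1)) → ℝ) :
    ∫ s in t₀..t, u s i * Epoly u t₀ n c s
      = ∑ g : Fin n → Fin (m + 1), c (List.ofFn g) * E u t₀ (i :: List.ofFn g) t := by
  simp only [Epoly, Finset.mul_sum, mul_left_comm (u _ i)]
  rw [integral_finsetSum fun g _ => (hE _).const_mul _]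
  simp only [intervalIntegral.integral_const_mul, E_cons]

theorem Epoly_succ_shuffle_mono_cons_cons (n : ℕ) (i j : Fin (m + 1))
    (η ξ : List (Fin (m + 1))) (t : ℝ) :
    Epoly u t₀ (n + 1) (shuffle (mono (i :: η)) (mono (j :: ξ))) t
      = ∑ g : Fin n → Fin (m + 1),
          shuffle (mono η) (mono (j :: ξ)) (List.ofFn g) * E u t₀ (i :: List.ofFn g) t
        + ∑ g : Fin n → Fin (m + 1),
          shuffle (mono (i :: η)) (mono ξ) (List.ofFn g) * E u t₀ (j :: List.ofFn g) t := by
  rw [Epoly, sum_ofFn_succ n fun w =>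
    shuffle (mono (i :: η)) (mono (j :: ξ)) w * E u t₀ w t]
  simp only [shuffle_mono_cons_cons, add_mul, ite_mul, zero_mul, Finset.sum_add_distrib]
  rw [Finset.sum_comm, Finset.sum_comm (γ := Fin (m + 1))]
  simp

theorem E_cons_mul_E_cons {t : ℝ} (ht : t₀ ≤ t)
    (hE : ∀ w a, IntervalIntegrable (fun s => u s a * E u t₀ w s) volume t₀ t)
    (i j : Fin (m + 1)) (η ξ : List (Fin (m + 1))) :
    E u t₀ (i :: η) t * E u t₀ (j :: ξ) t
      = (∫ s in t₀..t, u s i * (E u t₀ η s * E u t₀ (j :: ξ) s))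
        + ∫ s in t₀..t, u s j * (E u t₀ (i :: η) s * E u t₀ ξ s) := by
  rw [E_cons, E_cons, integral_mul_integral_eq_integral_mul_primitive_add ht (hE η i) (hE ξ j)]
  simp only [← E_cons, mul_assoc, mul_comm (E u t₀ (i :: η) _)]

theorem E_mul_E {t : ℝ} (hint : ∀ i, IntervalIntegrable (fun τ => u τ i) volume t₀ t)
    (ht : t₀ ≤ t) (η ξ : List (Fin (m + 1))) :
    E u t₀ η t * E u t₀ ξ t = Epoly u t₀ (η.length + ξ.length) (shuffle (mono η) (mono ξ)) t := by
  induction η generalizing ξ t with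
  | nil => rw [E, one_mul, shuffle_mono_nil_left, Epoly_mono u t₀ (by simp)]
  | cons i η ihη =>
    induction ξ generalizing t with
    | nil => rw [E, mul_one, shuffle_mono_nil_right, Epoly_mono u t₀ (by simp)]
    | cons j ξ ihξ =>
      have hE (w : List (Fin (m + 1))) (a : Fin (m + 1)) :
          IntervalIntegrable (fun s => u s a * E u t₀ w s) volume t₀ t :=
        (hint a).mul_continuousOn (continuousOn_E u t₀ hint w)
      have hint_mono {s : ℝ} (hs : s ∈ uIcc t₀ t) (a : Fin (m + 1)) :
          IntervalIntegrable (fun τ => u τ a) volume t₀ s :=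
        (hint a).mono_set (uIcc_subset_uIcc_left hs)
      calc E u t₀ (i :: η) t * E u t₀ (j :: ξ) t
          = (∫ s in t₀..t, u s i * (E u t₀ η s * E u t₀ (j :: ξ) s))
            + ∫ s in t₀..t, u s j * (E u t₀ (i :: η) s * E u t₀ ξ s) :=
            E_cons_mul_E_cons u t₀ ht hE i j η ξ
        _ = (∫ s in t₀..t, u s i * Epoly u t₀ (η.length + ξ.length + 1)
                (shuffle (mono η) (mono (j :: ξ))) s)
            + ∫ s in t₀..t, u s j * Epoly u t₀ (η.length + ξ.length + 1)
                (shuffle (mono (i :: η)) (mono ξ)) s := by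
          congr 1 <;> refine integral_congr fun s hs => ?_
          · rw [ihη (hint_mono hs) ((uIcc_of_le ht ▸ hs).1) (j :: ξ)]; rfl
          · rw [ihξ (hint_mono hs) ((uIcc_of_le ht ▸ hs).1), List.length_cons, Nat.succ_add]
        _ = Epoly u t₀ ((i :: η).length + (j :: ξ).length)
              (shuffle (mono (i :: η)) (mono (j :: ξ))) t := by
          rw [integral_mul_Epoly u t₀ (hE · i), integral_mul_Epoly u t₀ (hE · j),
            List.length_cons, Nat.succ_add, Epoly_succ_shuffle_mono_cons_cons]; rfl

end IteratedIntegral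

theorem iterated_integral_shuffle_general {m : ℕ} (u : ℝ → Fin (m + 1) → ℝ) (t₀ t₁ : ℝ)
    (hint : ∀ i, IntervalIntegrable (fun τ => u τ i) volume t₀ t₁) :
    ∀ (η ξ : List (Fin (m + 1))) (t : ℝ), t₀ ≤ t → t ≤ t₁ →
      E u t₀ η t * E u t₀ ξ t =
        ∑ f : Fin (η.length + ξ.length) → Fin (m + 1),
          shuffle (mono η) (mono ξ) (List.ofFn f) * E u t₀ (List.ofFn f) t :=
  fun η ξ _ ht₀ ht₁ =>
    have hsub : uIcc t₀ _ ⊆ uIcc t₀ t₁ := uIcc_subset_uIcc_left (Icc_subset_uIcc ⟨ht₀, ht₁⟩)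
    E_mul_E u t₀ (fun i => (hint i).mono_set hsub) ht₀ η ξ

/-- For all words `η, ξ` over `X = {x₀,…,x_m}`, all `t₀ ≤ t ≤ t₁`, and all
integrable `u` (with `u₀ := 1`), the iterated integrals satisfy
`E_η[u](t,t₀) · E_ξ[u](t,t₀) = E_{η ⧢ ξ}[u](t,t₀)`, where `E` is extended
linearly to the shuffle polynomial `η ⧢ ξ` (a linear combination of words of
length `|η| + |ξ|`, identified with functions `Fin (|η|+|ξ|) → Fin (m+1)`). -/
theorem iterated_integral_shuffle {m : ℕ} (u : ℝ → Fin (m + 1) → ℝ) (t₀ t₁ : ℝ)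
    (h0 : ∀ t, u t 0 = 1)
    (hint : ∀ i, IntervalIntegrable (fun τ => u τ i) volume t₀ t₁) :
    ∀ (η ξ : List (Fin (m + 1))) (t : ℝ), t₀ ≤ t → t ≤ t₁ →
      E u t₀ η t * E u t₀ ξ t =
        ∑ f : Fin (η.length + ξ.length) → Fin (m + 1),
          shuffle (mono η) (mono ξ) (List.ofFn f) * E u t₀ (List.ofFn f) t :=
  iterated_integral_shuffle_general u t₀ t₁ hint
end
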